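/- For fixed λ > 0, as x → ∞, log g_λ(x) = −x log x + (1 + log λ)x − (3/2) log x + (log λ − λ − log(2π)/2) + O(1/x), where g_λ(x) = 1 − Γ(x+1,λ)/Γ(x+1). -/

import Mathlib

/-!
With `γ(a, λ) = ∫_0^λ t^(a-1) e^(-t) dt` we have `g_λ(x) = γ(x+1, λ) / Γ(x+1)`.
On `(0, λ]` the bounds `e^(-λ) ≤ e^(-t) ≤ e^(-λ) + (λ - t)` give
`γ(a, λ) = e^(-λ) λ^a / a · (1 + O(1/a))`. Stirling's formula with Robbins' error bound,
`0 ≤ log n! - log (√(2πn) (n/e)^n) ≤ 1/(12n)`, passes from `n = ⌊x⌋` to real `x` by the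
log-convexity of `Γ`, so `log Γ(x+1) = log (√(2πx) (x/e)^x) + O(1/x)`. The expansion is the
difference of the two logarithms.
-/

open Real Filter Asymptotics

/-- Upper incomplete gamma function `Γ(a, x) = ∫_x^∞ t^(a-1) e^(-t) dt`. -/
noncomputable def upperGamma (a x : ℝ) : ℝ := ∫ t in Set.Ioi x, t ^ (a - 1) * Real.exp (-t)

/-- `g_λ(x) = 1 − Γ(x+1, λ)/Γ(x+1)`. -/
noncomputable def gFun (lam x : ℝ) : ℝ := 1 - upperGamma (x + 1) lam / Real.Gamma (x + 1)

open MeasureTheory Set Topology Stirling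
open scoped Nat

lemma sub_div_le_log_sub_log {a b : ℝ} (ha : 0 < a) (hb : 0 < b) :
    (b - a) / b ≤ log b - log a := by
  have h := one_sub_inv_le_log_of_pos (div_pos hb ha)
  rwa [log_div hb.ne' ha.ne', inv_div, one_sub_div hb.ne'] at h

lemma log_sub_log_le_sub_div {a b : ℝ} (ha : 0 < a) (hb : 0 < b) :
    log b - log a ≤ (b - a) / a := by
  have h := log_le_sub_one_of_pos (div_pos hb ha)
  rwa [log_div hb.ne' ha.ne', div_sub_one ha.ne'] at h

noncomputable def lowerGamma (a x : ℝ) : ℝ := ∫ t in Ioc 0 x, t ^ (a - 1) * exp (-t)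

section LowerGamma

variable {a x : ℝ}

lemma integrableOn_Ioi_rpow_sub_one_mul_exp_neg (ha : 0 < a) :
    IntegrableOn (fun t => t ^ (a - 1) * exp (-t)) (Ioi 0) :=
  (GammaIntegral_convergent ha).congr_fun (fun _ _ => mul_comm _ _) measurableSet_Ioi

lemma Gamma_eq_lowerGamma_add_upperGamma (ha : 0 < a) (hx : 0 ≤ x) :
    Gamma a = lowerGamma a x + upperGamma a x := by
  have hint := integrableOn_Ioi_rpow_sub_one_mul_exp_neg ha
  have hΓ : Gamma a = ∫ t in Ioi 0, t ^ (a - 1) * exp (-t) := by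
    rw [Gamma_eq_integral ha]
    simp only [mul_comm (exp _)]
  rw [hΓ, ← Ioc_union_Ioi_eq_Ioi hx,
    setIntegral_union (Ioc_disjoint_Ioi le_rfl) measurableSet_Ioi
      (hint.mono_set Ioc_subset_Ioi_self) (hint.mono_set (Ioi_subset_Ioi hx)),
    lowerGamma, upperGamma]

lemma integrableOn_Ioc_rpow {b : ℝ} (hb : -1 < b) (hx : 0 ≤ x) :
    IntegrableOn (fun t => t ^ b) (Ioc 0 x) :=
  (intervalIntegrable_iff_integrableOn_Ioc_of_le hx).1 (intervalIntegral.intervalIntegrable_rpow' hb)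

lemma integral_Ioc_rpow {b : ℝ} (hb : -1 < b) (hx : 0 ≤ x) :
    ∫ t in Ioc 0 x, t ^ b = x ^ (b + 1) / (b + 1) := by
  rw [← intervalIntegral.integral_of_le hx, integral_rpow (.inl hb),
    zero_rpow (by linarith), sub_zero]

lemma exp_neg_le_exp_neg_add_sub {t : ℝ} (ht : 0 ≤ t) (htx : t ≤ x) :
    exp (-t) ≤ exp (-x) + (x - t) := by
  have h1 : exp (-t) * (1 + (t - x)) ≤ exp (-x) := by
    calc exp (-t) * (1 + (t - x)) ≤ exp (-t) * exp (t - x) := by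
          gcongr; linarith [add_one_le_exp (t - x)]
      _ = exp (-x) := by rw [← exp_add]; ring_nf
  have h2 : exp (-t) ≤ 1 := exp_le_one_iff.2 (by linarith)
  nlinarith

lemma exp_neg_mul_rpow_div_le_lowerGamma (ha : 0 < a) (hx : 0 ≤ x) :
    exp (-x) * (x ^ a / a) ≤ lowerGamma a x := by
  have hint := integrableOn_Ioc_rpow (by linarith : -1 < a - 1) hx
  calc exp (-x) * (x ^ a / a) = ∫ t in Ioc 0 x, exp (-x) * t ^ (a - 1) := by
        rw [integral_const_mul, integral_Ioc_rpow (by linarith) hx, sub_add_cancel]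
    _ ≤ lowerGamma a x :=
      setIntegral_mono_on (hint.const_mul _)
        ((integrableOn_Ioi_rpow_sub_one_mul_exp_neg ha).mono_set Ioc_subset_Ioi_self)
        measurableSet_Ioc fun t ht => by
          rw [mul_comm]
          exact mul_le_mul_of_nonneg_left (exp_le_exp.2 (neg_le_neg ht.2))
            (rpow_nonneg ht.1.le _)

lemma lowerGamma_pos (ha : 0 < a) (hx : 0 < x) : 0 < lowerGamma a x :=
  (by positivity : 0 < exp (-x) * (x ^ a / a)).trans_le
    (exp_neg_mul_rpow_div_le_lowerGamma ha hx.le)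

lemma lowerGamma_le (ha : 0 < a) (hx : 0 < x) :
    lowerGamma a x ≤ exp (-x) * (x ^ a / a) + x ^ (a + 1) / (a * (a + 1)) := by
  have hint := integrableOn_Ioc_rpow (by linarith : -1 < a - 1) hx.le
  have hint' := integrableOn_Ioc_rpow (by linarith : -1 < a) hx.le
  calc lowerGamma a x
      ≤ ∫ t in Ioc 0 x, (exp (-x) * t ^ (a - 1) + (x * t ^ (a - 1) - t ^ a)) := by
        refine setIntegral_mono_on
          ((integrableOn_Ioi_rpow_sub_one_mul_exp_neg ha).mono_set Ioc_subset_Ioi_self)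
          ((hint.const_mul _).add ((hint.const_mul _).sub hint')) measurableSet_Ioc
          fun t ht => ?_
        have ht0 : 0 < t := ht.1
        calc t ^ (a - 1) * exp (-t) ≤ t ^ (a - 1) * (exp (-x) + (x - t)) := by
              gcongr; exact exp_neg_le_exp_neg_add_sub ht0.le ht.2
          _ = _ := by rw [rpow_sub_one ht0.ne']; field_simp
    _ = exp (-x) * (x ^ a / a) + (x * (x ^ a / a) - x ^ (a + 1) / (a + 1)) := by
        have hsub : IntegrableOn (fun t => x * t ^ (a - 1) - t ^ a) (Ioc 0 x) :=
          (hint.const_mul _).sub hint'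
        rw [integral_add (hint.const_mul _) hsub,
          integral_sub (hint.const_mul _) hint', integral_const_mul, integral_const_mul,
          integral_Ioc_rpow (by linarith) hx.le, integral_Ioc_rpow (by linarith) hx.le,
          sub_add_cancel]
    _ = _ := by rw [rpow_add_one hx.ne']; field_simp; ring

lemma abs_log_lowerGamma_sub_le (ha : 0 < a) (hx : 0 < x) :
    |log (lowerGamma a x) - (a * log x - x - log a)| ≤ x * exp x / (a + 1) := by
  set B := exp (-x) * (x ^ a / a)
  have hB : 0 < B := by positivity
  have hlogB : log B = a * log x - x - log a := by
    rw [log_mul (by positivity) (by positivity), log_exp, log_div (by positivity) ha.ne',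
      log_rpow hx]
    ring
  have hε : 0 ≤ x * exp x / (a + 1) := by positivity
  have hupper : lowerGamma a x ≤ B * (1 + x * exp x / (a + 1)) := by
    refine (lowerGamma_le ha hx).trans_eq ?_
    simp only [B]
    rw [rpow_add_one hx.ne', exp_neg]
    field_simp
  have h1 := log_le_log hB (exp_neg_mul_rpow_div_le_lowerGamma ha hx.le)
  have h2 := log_le_log (lowerGamma_pos ha hx) hupper
  rw [log_mul hB.ne' (by positivity)] at h2
  have h3 := log_le_sub_one_of_pos (by positivity : 0 < 1 + x * exp x / (a + 1))
  rw [← hlogB, abs_le]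
  constructor <;> linarith

end LowerGamma

/-- `log (√(2πx) (x/e)^x)`. -/
noncomputable def logStirling (x : ℝ) : ℝ := x * log x - x + log x / 2 + log (2 * π) / 2

lemma log_stirlingSeq_sub_log_sqrt_pi_le {n : ℕ} (hn : n ≠ 0) :
    log (stirlingSeq n) - log √π ≤ 1 / (12 * n) := by
  obtain ⟨k, rfl⟩ := Nat.exists_eq_succ_of_ne_zero hn
  -- Robbins' bound makes `log (stirlingSeq n) - 1 / (12 n)` increase to `log √π`.
  set g : ℕ → ℝ := fun k => log (stirlingSeq (k + 1)) - 1 / ((k : ℝ) + 1) / 12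
  have hmono : Monotone g := monotone_nat_of_le_succ fun k => by
    have h := log_stirlingSeq_sdiff_le (k + 1)
    have htelescope : 1 / ((k : ℝ) + 1) / 12 - 1 / ((k : ℝ) + 1 + 1) / 12
        = 1 / (12 * (k + 1) * (k + 1 + 1)) := by field_simp; ring
    simp only [g]
    push_cast at h ⊢
    linarith
  have hlim : Tendsto g atTop (𝓝 (log √π - 0 / 12)) :=
    ((continuousAt_log (by positivity)).tendsto.comp
      (tendsto_stirlingSeq_sqrt_pi.comp (tendsto_add_atTop_nat 1))).sub
      (tendsto_one_div_add_atTop_nhds_zero_nat.div_const 12)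
  have h := hmono.ge_of_tendsto hlim k
  simp only [g, zero_div, sub_zero] at h
  push_cast
  rw [div_div, mul_comm] at h
  exact sub_le_comm.1 h

lemma log_factorial_le_logStirling_add {n : ℕ} (hn : n ≠ 0) :
    log n ! ≤ logStirling n + 1 / (12 * n) := by
  have hn' : (0 : ℝ) < n := by positivity
  have h := log_stirlingSeq_formula n
  rw [log_div hn'.ne' (exp_pos 1).ne', log_exp, log_mul two_ne_zero hn'.ne'] at h
  have := log_stirlingSeq_sub_log_sqrt_pi_le hn
  rw [log_sqrt pi_pos.le] at this
  rw [logStirling, log_mul two_ne_zero pi_pos.ne']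
  linarith

lemma logStirling_le_log_factorial {n : ℕ} (hn : n ≠ 0) : logStirling n ≤ log n ! :=
  le_log_factorial_stirling hn

lemma logStirling_add_mul_log_le {x θ : ℝ} (hx : 0 < x) (hθ : 0 ≤ θ) :
    logStirling x + θ * log x ≤ logStirling (x + θ) := by
  have hxθ : 0 < x + θ := by linarith
  have hu := sub_div_le_log_sub_log hx hxθ
  rw [add_sub_cancel_left, div_le_iff₀' hxθ] at hu
  have hu0 : 0 ≤ log (x + θ) - log x := sub_nonneg.2 (log_le_log hx (by linarith))
  have hexpand : logStirling (x + θ) - (logStirling x + θ * log x)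
      = (x + θ) * (log (x + θ) - log x) - θ + (log (x + θ) - log x) / 2 := by
    unfold logStirling; ring
  linarith

lemma logStirling_add_le {x θ : ℝ} (hx : 0 < x) (hθ0 : 0 ≤ θ) (hθ1 : θ ≤ 1) :
    logStirling (x + θ) ≤ logStirling x + θ * log x + 3 / (2 * x) := by
  have hxθ : 0 < x + θ := by linarith
  have hu := log_sub_log_le_sub_div hx hxθ
  rw [add_sub_cancel_left] at hu
  have hexpand : logStirling (x + θ) - (logStirling x + θ * log x)
      = (x + θ) * (log (x + θ) - log x) - θ + (log (x + θ) - log x) / 2 := by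
    unfold logStirling; ring
  have h1 : (x + θ) * (log (x + θ) - log x) ≤ θ + θ * (θ / x) := by
    calc (x + θ) * (log (x + θ) - log x) ≤ (x + θ) * (θ / x) := by gcongr
      _ = θ + θ * (θ / x) := by field_simp
  have hθx : θ / x ≤ 1 / x := by gcongr
  have h2 : θ * (θ / x) ≤ 1 / x := by nlinarith [div_nonneg hθ0 hx.le]
  rw [show 3 / (2 * x) = 1 / x + 1 / x / 2 by ring]
  linarith

lemma log_Gamma_add_one {y : ℝ} (hy : 0 < y) : log (Gamma (y + 1)) = log (Gamma y) + log y := by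
  rw [Gamma_add_one hy.ne', log_mul hy.ne' (Gamma_pos_of_pos hy).ne', add_comm]

lemma log_factorial_add_le_log_Gamma {n : ℕ} (hn : n ≠ 0) {θ : ℝ} (hθ : 0 ≤ θ) :
    log n ! + θ * log n ≤ log (Gamma (n + θ + 1)) := by
  rcases hθ.eq_or_lt with rfl | hθ
  · simp [Gamma_nat_eq_factorial]
  have h := BohrMollerup.f_add_nat_ge convexOn_log_Gamma (log_Gamma_add_one ·)
    (n := n + 1) (by omega) hθ
  simpa [Gamma_nat_eq_factorial, add_right_comm] using h

lemma log_Gamma_le_log_factorial_add {n : ℕ} {θ : ℝ} (hθ0 : 0 ≤ θ) (hθ1 : θ ≤ 1) :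
    log (Gamma (n + θ + 1)) ≤ log n ! + θ * log (n + 1) := by
  rcases hθ0.eq_or_lt with rfl | hθ0
  · simp [Gamma_nat_eq_factorial]
  have h := BohrMollerup.f_add_nat_le convexOn_log_Gamma (log_Gamma_add_one ·)
    (n := n + 1) (by omega) hθ0 hθ1
  simpa [Gamma_nat_eq_factorial, add_right_comm] using h

lemma abs_log_Gamma_nat_add_sub_logStirling_le {n : ℕ} (hn : n ≠ 0) {θ : ℝ} (hθ0 : 0 ≤ θ)
    (hθ1 : θ ≤ 1) : |log (Gamma (n + θ + 1)) - logStirling (n + θ)| ≤ 2 / n := by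
  have hn' : (0 : ℝ) < n := by positivity
  have hlog_succ : θ * log (n + 1) ≤ θ * log n + 1 / n := by
    have h := log_sub_log_le_sub_div hn' (by positivity : (0 : ℝ) < n + 1)
    rw [add_sub_cancel_left] at h
    have : θ * (1 / n) ≤ 1 / n := mul_le_of_le_one_left (by positivity) hθ1
    nlinarith
  have hΓ := log_Gamma_le_log_factorial_add (n := n) hθ0 hθ1
  have hΓ' := log_factorial_add_le_log_Gamma hn hθ0
  have hfac := log_factorial_le_logStirling_add hn
  have hfac' := logStirling_le_log_factorial hn
  have hS := logStirling_add_mul_log_le hn' hθ0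
  have hS' := logStirling_add_le hn' hθ0 hθ1
  have h12 : 1 / (12 * (n : ℝ)) = 1 / n / 12 := by ring
  have h32 : 3 / (2 * (n : ℝ)) = 3 / 2 * (1 / n) := by ring
  have h2 : 2 / (n : ℝ) = 2 * (1 / n) := by ring
  have h0 : 0 ≤ 1 / (n : ℝ) := by positivity
  rw [abs_le]
  constructor <;> linarith

lemma isBigO_log_Gamma_add_one_sub_logStirling :
    (fun x => log (Gamma (x + 1)) - logStirling x) =O[atTop] (fun x => 1 / x) := by
  refine IsBigO.of_bound 4 ?_
  filter_upwards [eventually_ge_atTop 1] with x hx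
  have hx0 : 0 < x := by linarith
  have hn : ⌊x⌋₊ ≠ 0 := (Nat.floor_pos.2 hx).ne'
  have hn' : (0 : ℝ) < ⌊x⌋₊ := by positivity
  have h := abs_log_Gamma_nat_add_sub_logStirling_le hn (sub_nonneg.2 (Nat.floor_le hx0.le))
    (by linarith [Nat.lt_floor_add_one x])
  rw [add_sub_cancel] at h
  rw [norm_eq_abs, norm_of_nonneg (by positivity), mul_one_div]
  refine h.trans ((div_le_div_iff₀ hn' hx0).2 ?_)
  linarith [Nat.lt_floor_add_one x, (Nat.one_le_cast (α := ℝ)).2 (Nat.one_le_iff_ne_zero.2 hn)]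

lemma isBigO_log_lowerGamma_add_one_sub {lam : ℝ} (hlam : 0 < lam) :
    (fun x => log (lowerGamma (x + 1) lam) - ((x + 1) * log lam - lam - log (x + 1)))
      =O[atTop] (fun x => 1 / x) := by
  refine IsBigO.of_bound (lam * exp lam) ?_
  filter_upwards [eventually_gt_atTop 0] with x hx
  rw [norm_eq_abs, norm_of_nonneg (by positivity), mul_one_div]
  calc _ ≤ lam * exp lam / (x + 1 + 1) := abs_log_lowerGamma_sub_le (by linarith) hlam
    _ ≤ lam * exp lam / x := by gcongr; linarith

lemma isBigO_log_add_one_sub_log :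
    (fun x => log (x + 1) - log x) =O[atTop] (fun x : ℝ => 1 / x) := by
  refine IsBigO.of_bound 1 ?_
  filter_upwards [eventually_gt_atTop 0] with x hx
  have h := log_sub_log_le_sub_div hx (by linarith : 0 < x + 1)
  rw [add_sub_cancel_left] at h
  rw [one_mul, norm_of_nonneg (sub_nonneg.2 (log_le_log hx (by linarith))),
    norm_of_nonneg (by positivity)]
  exact h

lemma gFun_eq_lowerGamma_div_Gamma {lam x : ℝ} (hlam : 0 ≤ lam) (hx : -1 < x) :
    gFun lam x = lowerGamma (x + 1) lam / Gamma (x + 1) := by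
  have hΓ := (Gamma_pos_of_pos (by linarith : 0 < x + 1)).ne'
  rw [gFun, eq_div_iff hΓ, sub_mul, one_mul, div_mul_cancel₀ _ hΓ,
    Gamma_eq_lowerGamma_add_upperGamma (by linarith) hlam, add_sub_cancel_right]

/-- Asymptotic expansion: as `x → ∞`,
`log g_λ(x) = −x log x + (1 + log λ)x − (3/2) log x + (log λ − λ − log(2π)/2) + O(1/x)`. -/
theorem log_gFun_asymptotic (lam : ℝ) (hlam : 0 < lam) :
    (fun x : ℝ => Real.log (gFun lam x) -
        (-x * Real.log x + (1 + Real.log lam) * x - (3 / 2) * Real.log x +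
          (Real.log lam - lam - Real.log (2 * Real.pi) / 2)))
      =O[atTop] (fun x : ℝ => 1 / x) := by
  refine (((isBigO_log_lowerGamma_add_one_sub hlam).sub
    isBigO_log_Gamma_add_one_sub_logStirling).sub isBigO_log_add_one_sub_log).congr' ?_ .rfl
  filter_upwards [eventually_gt_atTop 0] with x hx
  rw [gFun_eq_lowerGamma_div_Gamma hlam.le (by linarith),
    log_div (lowerGamma_pos (by linarith) hlam).ne' (Gamma_pos_of_pos (by linarith)).ne',
    logStirling]
  ring
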